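/- Let Ω ⊆ ℂⁿ be a domain, p ∈ ∂Ω a k-point with ∂Ω Dini-smooth near p, so that the upper bound k_Ω(z,w) ≤ log(1 + 2‖z-w‖/√(δ_Ω(z)δ_Ω(w))) holds for z,w ∈ Ω near p. Then Ω satisfies the weak Gromov property at p: for every o ∈ Ω and every q ∈ ∂Ω with q ≠ p, liminf_{z→p, w→q}(k_Ω(z,w) - k_Ω(z,o)) > -∞. -/

import Mathlib

open Set Metric Filter Topology MeasureTheory

noncomputable section

/-- Inverse hyperbolic tangent. -/
def artanh (x : ℝ) : ℝ := (1 / 2) * Real.log ((1 + x) / (1 - x))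

variable {n : ℕ}

/-- The extremal quantity `l̃_Ω` in the definition of the Lempert function:
the infimum of `|α|` over holomorphic discs `φ : Δ → Ω` with `φ 0 = z`, `φ α = w`. -/
def lempertT (Ω : Set (EuclideanSpace ℂ (Fin n))) (z w : EuclideanSpace ℂ (Fin n)) : ℝ :=
  sInf {r : ℝ | ∃ (α : ℂ) (φ : ℂ → EuclideanSpace ℂ (Fin n)), r = ‖α‖ ∧ α ∈ ball (0 : ℂ) 1 ∧
    DifferentiableOn ℂ φ (ball (0 : ℂ) 1) ∧ MapsTo φ (ball (0 : ℂ) 1) Ω ∧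
    φ 0 = z ∧ φ α = w}

/-- The Lempert function `l_Ω = artanh l̃_Ω`. -/
def lempert (Ω : Set (EuclideanSpace ℂ (Fin n))) (z w : EuclideanSpace ℂ (Fin n)) : ℝ :=
  artanh (lempertT Ω z w)

/-- The Kobayashi pseudodistance: the largest pseudodistance below the Lempert function,
realized as the infimum over chains. -/
def kobDist (Ω : Set (EuclideanSpace ℂ (Fin n))) (z w : EuclideanSpace ℂ (Fin n)) : ℝ :=
  sInf {r : ℝ | ∃ (m : ℕ) (x : ℕ → EuclideanSpace ℂ (Fin n)), x 0 = z ∧ x m = w ∧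
    (∀ i ≤ m, x i ∈ Ω) ∧ r = ∑ i ∈ Finset.range m, lempert Ω (x i) (x (i + 1))}

/-- The Kobayashi–Royden pseudometric. -/
def kobRoyden (Ω : Set (EuclideanSpace ℂ (Fin n))) (z v : EuclideanSpace ℂ (Fin n)) : ℝ :=
  sInf {r : ℝ | ∃ (c : ℂ) (φ : ℂ → EuclideanSpace ℂ (Fin n)), r = ‖c‖ ∧
    DifferentiableOn ℂ φ (ball (0 : ℂ) 1) ∧ MapsTo φ (ball (0 : ℂ) 1) Ω ∧
    φ 0 = z ∧ c • deriv φ 0 = v}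

/-- The Kobayashi–Royden length of a curve `γ` on `[a,b]`. -/
def kobLength (Ω : Set (EuclideanSpace ℂ (Fin n))) (γ : ℝ → EuclideanSpace ℂ (Fin n))
    (a b : ℝ) : ℝ := ∫ t in a..b, kobRoyden Ω (γ t) (deriv γ t)

/-- An `ε`-geodesic for the Kobayashi length: an (absolutely) continuous curve in `Ω`
whose Kobayashi–Royden length exceeds the Kobayashi distance of its endpoints by at most `ε`. -/
def IsEpsGeodesic (Ω : Set (EuclideanSpace ℂ (Fin n))) (γ : ℝ → EuclideanSpace ℂ (Fin n))
    (a b : ℝ) (ε : ℝ) : Prop :=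
  a ≤ b ∧ ContinuousOn γ (Icc a b) ∧ MapsTo γ (Icc a b) Ω ∧
    kobLength Ω γ a b ≤ kobDist Ω (γ a) (γ b) + ε

/-- The Gromov product with respect to the Kobayashi distance. -/
def gromovK (Ω : Set (EuclideanSpace ℂ (Fin n))) (z w o : EuclideanSpace ℂ (Fin n)) : ℝ :=
  (kobDist Ω z o + kobDist Ω w o - kobDist Ω z w) / 2

/-- `p ∈ ∂Ω` is a `w`-point: for every neighbourhood `U` of `p` with `Ω \ U ≠ ∅`,
`lim_{z,w→p} inf_{o ∈ Ω \ U} (z|w)^Ω_o = ∞`. -/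
def IsWPoint (Ω : Set (EuclideanSpace ℂ (Fin n))) (p : EuclideanSpace ℂ (Fin n)) : Prop :=
  ∀ U ∈ 𝓝 p, (Ω \ U).Nonempty →
    ∀ M : ℝ, ∃ V ∈ 𝓝 p, ∀ z ∈ Ω ∩ V, ∀ w ∈ Ω ∩ V, ∀ o ∈ Ω \ U, M ≤ gromovK Ω z w o

/-- `p ∈ ∂Ω` is a `v`-point: `Ω` satisfies the weak Gromov property at `p`, i.e.
`liminf_{z→p, w→q} (k_Ω(z,w) - k_Ω(z,o)) > -∞` for every `o ∈ Ω` and every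
boundary point `q ≠ p`. -/
def IsVPoint (Ω : Set (EuclideanSpace ℂ (Fin n))) (p : EuclideanSpace ℂ (Fin n)) : Prop :=
  ∀ o ∈ Ω, ∀ q ∈ frontier Ω, q ≠ p →
    ∃ (M : ℝ) (V : Set (EuclideanSpace ℂ (Fin n))) (W : Set (EuclideanSpace ℂ (Fin n))),
      V ∈ 𝓝 p ∧ W ∈ 𝓝 q ∧ ∀ z ∈ Ω ∩ V, ∀ w ∈ Ω ∩ W, M ≤ kobDist Ω z w - kobDist Ω z o

/-- The Euclidean distance to the boundary. -/
def bdist (Ω : Set (EuclideanSpace ℂ (Fin n))) (z : EuclideanSpace ℂ (Fin n)) : ℝ :=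
  Metric.infDist z (frontier Ω)

end

/-- `p ∈ ∂Ω` is a `k`-point: for every neighbourhood `U` of `p`,
`liminf_{z→p} (k_Ω(z, Ω\U) − (1/2)log(1/δ_Ω(z))) > −∞`. -/
def IsKPoint {n : ℕ} (Ω : Set (EuclideanSpace ℂ (Fin n)))
    (p : EuclideanSpace ℂ (Fin n)) : Prop :=
  ∀ U ∈ 𝓝 p, ∃ C : ℝ, ∃ V ∈ 𝓝 p, ∀ z ∈ Ω ∩ V, ∀ o ∈ Ω \ U,
    (1 / 2) * Real.log (1 / bdist Ω z) - C ≤ kobDist Ω z o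

/-! The `k`-point condition bounds `k_Ω(z, w)` from below by `½ log(1/δ_Ω(z)) - C` as long as
`w` stays away from `p`, in particular for `w` near `q ≠ p`. Conversely, passing through a fixed
base point `z₀` near `p`, the triangle inequality and the Dini bound give
`k_Ω(z, o) ≤ k_Ω(z, z₀) + k_Ω(z₀, o) ≤ ½ log(1/δ_Ω(z)) + C'`. The two logarithms cancel in
`k_Ω(z, w) - k_Ω(z, o)`. -/

section Kobayashi

variable {n : ℕ}

lemma artanh_nonneg {x : ℝ} (hx₀ : 0 ≤ x) (hx₁ : x < 1) : 0 ≤ artanh x :=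
  mul_nonneg one_half_pos.le
    (Real.log_nonneg ((one_le_div (by linarith)).2 (by linarith)))

def lempertRadii (Ω : Set (EuclideanSpace ℂ (Fin n))) (z w : EuclideanSpace ℂ (Fin n)) :
    Set ℝ :=
  {r : ℝ | ∃ (α : ℂ) (φ : ℂ → EuclideanSpace ℂ (Fin n)), r = ‖α‖ ∧ α ∈ ball (0 : ℂ) 1 ∧
    DifferentiableOn ℂ φ (ball (0 : ℂ) 1) ∧ MapsTo φ (ball (0 : ℂ) 1) Ω ∧
    φ 0 = z ∧ φ α = w}

lemma lempertT_eq_sInf (Ω : Set (EuclideanSpace ℂ (Fin n))) (z w : EuclideanSpace ℂ (Fin n)) :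
    lempertT Ω z w = sInf (lempertRadii Ω z w) :=
  rfl

lemma lempertT_nonneg (Ω : Set (EuclideanSpace ℂ (Fin n))) (z w : EuclideanSpace ℂ (Fin n)) :
    0 ≤ lempertT Ω z w :=
  Real.sInf_nonneg fun _ ⟨α, _, hr, _⟩ => hr ▸ norm_nonneg α

lemma lempertT_lt_one (Ω : Set (EuclideanSpace ℂ (Fin n))) (z w : EuclideanSpace ℂ (Fin n)) :
    lempertT Ω z w < 1 := by
  rw [lempertT_eq_sInf]
  rcases (lempertRadii Ω z w).eq_empty_or_nonempty with hempty | ⟨r, hr⟩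
  · rw [hempty, Real.sInf_empty]
    exact one_pos
  · have hbdd : BddBelow (lempertRadii Ω z w) := ⟨0, fun _ ⟨α, _, hs, _⟩ => hs ▸ norm_nonneg α⟩
    obtain ⟨α, _, rfl, hα, _⟩ := id hr
    exact (csInf_le hbdd hr).trans_lt (mem_ball_zero_iff.1 hα)

lemma lempert_nonneg (Ω : Set (EuclideanSpace ℂ (Fin n))) (z w : EuclideanSpace ℂ (Fin n)) :
    0 ≤ lempert Ω z w :=
  artanh_nonneg (lempertT_nonneg Ω z w) (lempertT_lt_one Ω z w)

def kobChainLengths (Ω : Set (EuclideanSpace ℂ (Fin n))) (z w : EuclideanSpace ℂ (Fin n)) :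
    Set ℝ :=
  {r : ℝ | ∃ (m : ℕ) (x : ℕ → EuclideanSpace ℂ (Fin n)), x 0 = z ∧ x m = w ∧
    (∀ i ≤ m, x i ∈ Ω) ∧ r = ∑ i ∈ Finset.range m, lempert Ω (x i) (x (i + 1))}

lemma kobDist_eq_sInf (Ω : Set (EuclideanSpace ℂ (Fin n))) (z w : EuclideanSpace ℂ (Fin n)) :
    kobDist Ω z w = sInf (kobChainLengths Ω z w) :=
  rfl

lemma kobChainLengths_bddBelow (Ω : Set (EuclideanSpace ℂ (Fin n)))
    (z w : EuclideanSpace ℂ (Fin n)) : BddBelow (kobChainLengths Ω z w) :=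
  ⟨0, fun _ ⟨_, _, _, _, _, hr⟩ => hr ▸ Finset.sum_nonneg fun _ _ => lempert_nonneg Ω _ _⟩

lemma kobChainLengths_nonempty {Ω : Set (EuclideanSpace ℂ (Fin n))}
    {z w : EuclideanSpace ℂ (Fin n)} (hz : z ∈ Ω) (hw : w ∈ Ω) :
    (kobChainLengths Ω z w).Nonempty := by
  refine ⟨lempert Ω z w, 1, fun i => if i = 0 then z else w, by simp, by simp, ?_, by simp⟩
  intro i _
  dsimp only
  split_ifs
  exacts [hz, hw]

lemma add_mem_kobChainLengths {Ω : Set (EuclideanSpace ℂ (Fin n))}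
    {z y w : EuclideanSpace ℂ (Fin n)} {a b : ℝ}
    (ha : a ∈ kobChainLengths Ω z y) (hb : b ∈ kobChainLengths Ω y w) :
    a + b ∈ kobChainLengths Ω z w := by
  obtain ⟨m, x, hx₀, hxm, hxΩ, rfl⟩ := ha
  obtain ⟨m', x', hx'₀, hx'm, hx'Ω, rfl⟩ := hb
  set c : ℕ → EuclideanSpace ℂ (Fin n) := fun i => if i ≤ m then x i else x' (i - m)
  have hc_left : ∀ i ≤ m, c i = x i := fun i hi => if_pos hi
  have hc_right : ∀ i, c (m + i) = x' i := by
    rintro (_ | i)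
    · rw [add_zero, hc_left m le_rfl, hxm, hx'₀]
    · exact (if_neg (by omega)).trans (by rw [Nat.add_sub_cancel_left])
  refine ⟨m + m', c, ?_, by rw [hc_right, hx'm], ?_, ?_⟩
  · rw [hc_left 0 (Nat.zero_le m), hx₀]
  · intro i hi
    rcases le_or_gt i m with him | him
    · exact hc_left i him ▸ hxΩ i him
    · obtain ⟨j, rfl⟩ := Nat.exists_eq_add_of_le him.le
      exact hc_right j ▸ hx'Ω j (by omega)
  · rw [Finset.sum_range_add]
    congr 1
    · refine Finset.sum_congr rfl fun i hi => ?_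
      have hi : i < m := Finset.mem_range.1 hi
      rw [hc_left i hi.le, hc_left (i + 1) hi]
    · exact Finset.sum_congr rfl fun i _ => (congrArg₂ _ (hc_right i) (hc_right (i + 1))).symm

lemma kobDist_triangle {Ω : Set (EuclideanSpace ℂ (Fin n))}
    {z y w : EuclideanSpace ℂ (Fin n)} (hz : z ∈ Ω) (hy : y ∈ Ω) (hw : w ∈ Ω) :
    kobDist Ω z w ≤ kobDist Ω z y + kobDist Ω y w := by
  refine le_of_forall_pos_le_add fun ε hε => ?_
  obtain ⟨a, ha, hay⟩ := Real.lt_sInf_add_pos (kobChainLengths_nonempty hz hy) (half_pos hε)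
  obtain ⟨b, hb, hbw⟩ := Real.lt_sInf_add_pos (kobChainLengths_nonempty hy hw) (half_pos hε)
  calc kobDist Ω z w ≤ a + b := csInf_le (kobChainLengths_bddBelow Ω z w)
        (add_mem_kobChainLengths ha hb)
    _ ≤ kobDist Ω z y + kobDist Ω y w + ε := by
        rw [kobDist_eq_sInf, kobDist_eq_sInf]; linarith

lemma log_one_add_div_sqrt_le {a R d d₀ : ℝ} (ha₀ : 0 ≤ a) (ha : a ≤ R) (hd : 0 < d)
    (hd₁ : d ≤ 1) (hd₀ : 0 < d₀) :
    Real.log (1 + 2 * a / Real.sqrt (d * d₀)) ≤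
      Real.log (1 + 2 * R / Real.sqrt d₀) + (1 / 2) * Real.log (1 / d) := by
  have hsd : 0 < Real.sqrt d := Real.sqrt_pos.2 hd
  have hsd₀ : 0 < Real.sqrt d₀ := Real.sqrt_pos.2 hd₀
  have hsd₁ : Real.sqrt d ≤ 1 := Real.sqrt_le_one.2 hd₁
  have hR : 0 < 1 + 2 * R / Real.sqrt d₀ := by
    have := div_nonneg (mul_nonneg zero_le_two (ha₀.trans ha)) hsd₀.le
    linarith
  have hbound : 1 + 2 * a / Real.sqrt (d * d₀) ≤ (1 + 2 * R / Real.sqrt d₀) / Real.sqrt d := by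
    rw [Real.sqrt_mul hd.le, add_div, div_div, mul_comm (Real.sqrt d₀)]
    gcongr
    exact (one_le_div hsd).2 hsd₁
  have hlog_sqrt : Real.log (Real.sqrt d) = -((1 / 2) * Real.log (1 / d)) := by
    rw [Real.log_sqrt hd.le, one_div d, Real.log_inv]; ring
  calc Real.log (1 + 2 * a / Real.sqrt (d * d₀))
      ≤ Real.log ((1 + 2 * R / Real.sqrt d₀) / Real.sqrt d) :=
        Real.log_le_log (by positivity) hbound
    _ = _ := by rw [Real.log_div hR.ne' hsd.ne', hlog_sqrt, sub_neg_eq_add]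

lemma bdist_pos {Ω : Set (EuclideanSpace ℂ (Fin n))} (hΩ : IsOpen Ω)
    {p z : EuclideanSpace ℂ (Fin n)} (hp : p ∈ frontier Ω) (hz : z ∈ Ω) :
    0 < bdist Ω z :=
  (isClosed_frontier.notMem_iff_infDist_pos ⟨p, hp⟩).1
    fun hzf => (hΩ.frontier_eq ▸ hzf).2 hz

lemma exists_kobDist_le_half_log_inv_bdist {Ω : Set (EuclideanSpace ℂ (Fin n))}
    (hΩ : IsOpen Ω) {p o : EuclideanSpace ℂ (Fin n)} (hp : p ∈ frontier Ω) (ho : o ∈ Ω)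
    (hdini : ∃ U₀ ∈ 𝓝 p, ∀ z ∈ Ω ∩ U₀, ∀ w ∈ Ω ∩ U₀,
      kobDist Ω z w ≤ Real.log (1 + 2 * ‖z - w‖ / Real.sqrt (bdist Ω z * bdist Ω w))) :
    ∃ C : ℝ, ∃ V ∈ 𝓝 p, ∀ z ∈ Ω ∩ V,
      kobDist Ω z o ≤ (1 / 2) * Real.log (1 / bdist Ω z) + C := by
  obtain ⟨U₀, hU₀, hdini⟩ := hdini
  obtain ⟨z₀, hz₀U₀, hz₀⟩ :=
    mem_closure_iff_nhds.1 (frontier_subset_closure hp) U₀ hU₀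
  refine ⟨Real.log (1 + 2 * (1 + dist p z₀) / Real.sqrt (bdist Ω z₀)) + kobDist Ω z₀ o,
    U₀ ∩ ball p 1, inter_mem hU₀ (ball_mem_nhds p one_pos), ?_⟩
  rintro z ⟨hz, hzU₀, hzp⟩
  have hzp : dist z p < 1 := mem_ball.1 hzp
  have hδ₁ : bdist Ω z ≤ 1 := (infDist_le_dist_of_mem hp).trans hzp.le
  have hzz₀ : ‖z - z₀‖ ≤ 1 + dist p z₀ := by
    rw [← dist_eq_norm]; linarith [dist_triangle z p z₀]
  calc kobDist Ω z o ≤ kobDist Ω z z₀ + kobDist Ω z₀ o := kobDist_triangle hz hz₀ ho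
    _ ≤ _ := by
      grw [hdini z ⟨hz, hzU₀⟩ z₀ ⟨hz₀, hz₀U₀⟩, log_one_add_div_sqrt_le (norm_nonneg _)
        hzz₀ (bdist_pos hΩ hp hz) hδ₁ (bdist_pos hΩ hp hz₀)]
      linarith

end Kobayashi

theorem stmt_10_general {n : ℕ} (Ω : Set (EuclideanSpace ℂ (Fin n)))
    (hΩ : IsOpen Ω)
    (p : EuclideanSpace ℂ (Fin n)) (hp : p ∈ frontier Ω)
    (hk : IsKPoint Ω p)
    (hdini : ∃ U₀ ∈ 𝓝 p, ∀ z ∈ Ω ∩ U₀, ∀ w ∈ Ω ∩ U₀,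
      kobDist Ω z w ≤ Real.log (1 + 2 * ‖z - w‖ / Real.sqrt (bdist Ω z * bdist Ω w))) :
    IsVPoint Ω p := by
  intro o ho q _ hqp
  have hop : o ≠ p := fun h => (hΩ.frontier_eq ▸ hp).2 (h ▸ ho)
  obtain ⟨U, W, hU, hW, hUW⟩ := t2_separation_nhds hqp.symm
  obtain ⟨C, V, hV, hlower⟩ := hk (U ∩ {o}ᶜ) (inter_mem hU (compl_singleton_mem_nhds hop.symm))
  obtain ⟨C', V', hV', hupper⟩ := exists_kobDist_le_half_log_inv_bdist hΩ hp ho hdini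
  refine ⟨-C - C', V ∩ V', W, inter_mem hV hV', hW, ?_⟩
  rintro z ⟨hz, hzV, hzV'⟩ w ⟨hw, hwW⟩
  have hwU : w ∉ U ∩ {o}ᶜ := fun hwU => hUW.notMem_of_mem_left hwU.1 hwW
  linarith [hlower z ⟨hz, hzV⟩ w ⟨hw, hwU⟩, hupper z ⟨hz, hzV'⟩]

/-- first half of Proposition 5. Let `Ω ⊆ ℂⁿ` be a domain and `p ∈ ∂Ω` a
`k`-point such that the Dini-smooth type upper bound
`k_Ω(z,w) ≤ log(1 + 2‖z−w‖/√(δ_Ω(z)δ_Ω(w)))` holds for `z, w ∈ Ω` near `p`. Then `Ω`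
satisfies the weak Gromov property at `p`, i.e. `p` is a `v`-point. -/
theorem stmt_10 {n : ℕ} (Ω : Set (EuclideanSpace ℂ (Fin n)))
    (hΩ : IsOpen Ω) (hΩc : IsConnected Ω)
    (p : EuclideanSpace ℂ (Fin n)) (hp : p ∈ frontier Ω)
    (hk : IsKPoint Ω p)
    (hdini : ∃ U₀ ∈ 𝓝 p, ∀ z ∈ Ω ∩ U₀, ∀ w ∈ Ω ∩ U₀,
      kobDist Ω z w ≤ Real.log (1 + 2 * ‖z - w‖ / Real.sqrt (bdist Ω z * bdist Ω w))) :
    IsVPoint Ω p :=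
  stmt_10_general Ω hΩ p hp hk hdini
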